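/- arXiv:1705.03037 — 7 statements merged into one kernel-verified Lean document; each statement's English description precedes it below -/
import Mathlib

section
/- Soundness: For every set Γ of sentences of L(P) and every sentence φ, if Γ ⊢ φ then Γ ⊨ φ (every model with infinite universe satisfying all sentences of Γ also satisfies φ). -/
/-!
Soundness follows by induction on derivations, each rule being an elementary fact about sets
and cardinals. Only (weak-more-anti) and (up) need the universe `M` to be infinite: if
`#t < #s` then `tᶜ` has cardinality `#M`, and if `#s ≤ #u` and `#sᶜ ≤ #u` then `u` is infinite,
so `#M = #s + #sᶜ ≤ #u + #u = #u`.
-/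

open Cardinal

/-- Sentences of the language L(P): `all p q` = ∀(p,q), `exi p q` = ∃(p,q),
`geq p q` = ∃≥(p,q) (at least as many p as q), `gt p q` = ∃>(p,q) (more p than q). -/
inductive Sentence (P : Type u) : Type u
  | all : P → P → Sentence P
  | exi : P → P → Sentence P
  | geq : P → P → Sentence P
  | gt  : P → P → Sentence P

/-- Satisfaction of a sentence in a structure with interpretation `I`. -/
def Satisfies {P : Type u} {M : Type v} (I : P → Set M) : Sentence P → Prop
  | .all p q => I p ⊆ I q
  | .exi p q => (I p ∩ I q).Nonempty
  | .geq p q => #(I q) ≤ #(I p)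
  | .gt p q  => #(I q) < #(I p)

/-- The derivability relation Γ ⊢ φ, where `c` is noun complementation. -/
inductive Derives {P : Type u} (c : P → P) (Γ : Set (Sentence P)) : Sentence P → Prop
  | hyp {φ} : φ ∈ Γ → Derives c Γ φ
  | axm (p : P) : Derives c Γ (.all p p)
  | barbara {n p q} : Derives c Γ (.all n p) → Derives c Γ (.all p q) → Derives c Γ (.all n q)
  | some_ {p q} : Derives c Γ (.exi p q) → Derives c Γ (.exi p p)
  | conversion {p q} : Derives c Γ (.exi q p) → Derives c Γ (.exi p q)
  | darii {p n q} : Derives c Γ (.exi p n) → Derives c Γ (.all n q) → Derives c Γ (.exi p q)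
  | anti {p q} : Derives c Γ (.all p q) → Derives c Γ (.all (c q) (c p))
  | zero {p q} : Derives c Γ (.all p (c p)) → Derives c Γ (.all p q)
  | one {p q} : Derives c Γ (.all (c p) p) → Derives c Γ (.all q p)
  | subsetSize {p q} : Derives c Γ (.all p q) → Derives c Γ (.geq q p)
  | cardTrans {n p q} : Derives c Γ (.geq n p) → Derives c Γ (.geq p q) → Derives c Γ (.geq n q)
  | cardExi {p q} : Derives c Γ (.exi p p) → Derives c Γ (.geq q p) → Derives c Γ (.exi q q)
  | moreAtLeast {p q} : Derives c Γ (.gt p q) → Derives c Γ (.geq p q)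
  | moreLeft {n p q} : Derives c Γ (.gt n p) → Derives c Γ (.geq p q) → Derives c Γ (.gt n q)
  | moreRight {n p q} : Derives c Γ (.geq n p) → Derives c Γ (.gt p q) → Derives c Γ (.gt n q)
  | moreSome {p q} : Derives c Γ (.gt p q) → Derives c Γ (.exi p (c q))
  | exFalso {p q φ} : Derives c Γ (.exi p q) → Derives c Γ (.all q (c q)) → Derives c Γ φ
  | exFalsoCard {p q φ} : Derives c Γ (.gt p q) → Derives c Γ (.geq q p) → Derives c Γ φ
  | nonEmpty {p} : Derives c Γ (.geq p (c p)) → Derives c Γ (.exi p p)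
  | nonEmptyMore {p} : Derives c Γ (.all (c p) p) → Derives c Γ (.gt p (c p))
  | weakMoreAnti {p q x} : Derives c Γ (.gt q p) → Derives c Γ (.geq (c p) x)
  | up {x p q} : Derives c Γ (.geq x p) → Derives c Γ (.geq x (c p)) → Derives c Γ (.geq x q)

namespace Cardinal

variable {α : Type v} {s t : Set α}

theorem nonempty_of_mk_le (hs : s.Nonempty) (h : #s ≤ #t) : t.Nonempty :=
  mk_set_ne_zero_iff.mp fun ht => mk_set_ne_zero_iff.mpr hs (nonpos_iff_eq_zero.mp (ht ▸ h))

theorem inter_compl_nonempty_of_mk_lt (h : #t < #s) : (s ∩ tᶜ).Nonempty := by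
  by_contra hst
  rw [Set.not_nonempty_iff_eq_empty, ← Set.sdiff_eq, Set.sdiff_eq_empty] at hst
  exact (mk_le_mk_of_subset hst).not_gt h

theorem nonempty_of_mk_compl_le [Nonempty α] (h : #(sᶜ : Set α) ≤ #s) : s.Nonempty := by
  by_contra hs
  rw [Set.not_nonempty_iff_eq_empty] at hs
  subst hs
  simp at h

theorem mk_compl_lt_of_compl_subset [Nonempty α] (h : sᶜ ⊆ s) : #(sᶜ : Set α) < #s := by
  rw [compl_le_self.mp h]
  simpa using pos_iff_ne_zero.mpr (mk_ne_zero α)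

theorem mk_compl_eq_of_mk_lt [Infinite α] (h : #t < #s) : #(tᶜ : Set α) = #α :=
  mk_compl_of_infinite t (h.trans_le (mk_set_le s))

theorem mk_le_of_mk_le_of_mk_compl_le [Infinite α] {u : Set α} (hs : #s ≤ #u)
    (hsc : #(sᶜ : Set α) ≤ #u) : #α ≤ #u := by
  have hu : ℵ₀ ≤ #u := by
    by_contra! hfin
    have := add_lt_aleph0 (hs.trans_lt hfin) (hsc.trans_lt hfin)
    rw [mk_sum_compl] at this
    exact this.not_ge (aleph0_le_mk α)
  calc #α = #s + #(sᶜ : Set α) := (mk_sum_compl s).symm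
    _ ≤ #u + #u := add_le_add hs hsc
    _ = #u := add_eq_self hu

end Cardinal

section

variable {P : Type u} {c : P → P} {Γ : Set (Sentence P)} {M : Type v} {I : P → Set M}

theorem Derives.satisfies [Infinite M] (hI : ∀ p, I (c p) = (I p)ᶜ)
    (hΓ : ∀ ψ ∈ Γ, Satisfies I ψ) {φ : Sentence P} (h : Derives c Γ φ) : Satisfies I φ := by
  induction h with
  | hyp hφ => exact hΓ _ hφ
  | axm _ => exact subset_rfl
  | barbara _ _ ih₁ ih₂ => exact ih₁.trans ih₂
  | some_ _ ih => exact ih.mono (Set.subset_inter Set.inter_subset_left Set.inter_subset_left)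
  | conversion _ ih => exact ih.mono (Set.inter_comm _ _).subset
  | darii _ _ ih₁ ih₂ => exact ih₁.mono (Set.inter_subset_inter_right _ ih₂)
  | anti _ ih =>
    rw [Satisfies, hI, hI]
    exact Set.compl_subset_compl.mpr ih
  | zero _ ih =>
    rw [Satisfies, hI] at ih
    exact (le_compl_self.mp ih).le.trans bot_le
  | one _ ih =>
    rw [Satisfies, hI] at ih
    exact le_top.trans (compl_le_self.mp ih).ge
  | subsetSize _ ih => exact mk_le_mk_of_subset ih
  | cardTrans _ _ ih₁ ih₂ => exact ih₂.trans ih₁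
  | cardExi _ _ ih₁ ih₂ =>
    rw [Satisfies, Set.inter_self] at ih₁ ⊢
    exact nonempty_of_mk_le ih₁ ih₂
  | moreAtLeast _ ih => exact ih.le
  | moreLeft _ _ ih₁ ih₂ => exact ih₂.trans_lt ih₁
  | moreRight _ _ ih₁ ih₂ => exact ih₂.trans_le ih₁
  | moreSome _ ih =>
    rw [Satisfies, hI]
    exact inter_compl_nonempty_of_mk_lt ih
  | exFalso _ _ ih₁ ih₂ =>
    rw [Satisfies, hI] at ih₂
    exact ((ih₁.mono Set.inter_subset_right).ne_empty (le_compl_self.mp ih₂)).elim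
  | exFalsoCard _ _ ih₁ ih₂ => exact (ih₁.not_ge ih₂).elim
  | nonEmpty _ ih =>
    simp only [Satisfies, hI, Set.inter_self] at ih ⊢
    exact nonempty_of_mk_compl_le ih
  | nonEmptyMore _ ih =>
    simp only [Satisfies, hI] at ih ⊢
    exact mk_compl_lt_of_compl_subset ih
  | weakMoreAnti _ ih =>
    rw [Satisfies, hI, mk_compl_eq_of_mk_lt ih]
    exact mk_set_le _
  | up _ _ ih₁ ih₂ =>
    rw [Satisfies, hI] at ih₂
    exact (mk_set_le _).trans (mk_le_of_mk_le_of_mk_compl_le ih₁ ih₂)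

end

theorem soundness_general {P : Type u} (c : P → P)
    (Γ : Set (Sentence P)) (φ : Sentence P) (h : Derives c Γ φ) :
    ∀ (M : Type v) (I : P → Set M), Infinite M → (∀ p, I (c p) = (I p)ᶜ) →
      (∀ ψ ∈ Γ, Satisfies I ψ) → Satisfies I φ :=
  fun _ _ _ hI hΓ => h.satisfies hI hΓ

/-- Soundness: if Γ ⊢ φ then every model (with infinite universe, interpreting
complements correctly) satisfying all of Γ also satisfies φ. -/
theorem soundness {P : Type u} (c : P → P) (hc : ∀ p, c (c p) = p)
    (Γ : Set (Sentence P)) (φ : Sentence P) (h : Derives c Γ φ) :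
    ∀ (M : Type v) (I : P → Set M), Infinite M → (∀ p, I (c p) = (I p)ᶜ) →
      (∀ ψ ∈ Γ, Satisfies I ψ) → Satisfies I φ :=
  soundness_general c Γ φ h
end

section
/- If a finite set Γ of sentences of L(P) has a model (with infinite universe), then Γ has a model whose universe has cardinality ℵ_n for some natural number n. -/
open Cardinal

universe w u v

private def sigmaSubtypeEquiv {ι : Type} (O : ι → Type*) (b : ι → Prop) :
    {x : Σ t, O t // b x.1} ≃ Σ t : {t // b t}, O t.val where
  toFun x := ⟨⟨x.1.1, x.2⟩, x.1.2⟩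
  invFun x := ⟨⟨x.1.1, x.2⟩, x.1.2⟩
  left_inv x := rfl
  right_inv x := rfl

private def fiberEquiv {α : Type*} {ι : Type} (τ : α → ι) (b : ι → Prop) :
    {x : α // b (τ x)} ≃ Σ t : {t : ι // b t}, {y : α // τ y = t.val} where
  toFun x := ⟨⟨τ x.1, x.2⟩, ⟨x.1, rfl⟩⟩
  invFun y := ⟨y.2.1, by rw [y.2.2]; exact y.1.2⟩
  left_inv x := rfl
  right_inv := by
    rintro ⟨⟨t, ht⟩, ⟨y, hy⟩⟩
    dsimp at hy
    subst hy
    rfl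

private lemma sum_natCast {J : Type} [Fintype J] (m : J → ℕ) :
    Cardinal.sum (fun t => (m t : Cardinal.{w})) = ((∑ t, m t : ℕ) : Cardinal.{w}) := by
  have h2 : ∀ t : J, ((m t : Cardinal.{w})) = #(ULift.{w} (Fin (m t))) := by intro t; simp
  calc Cardinal.sum (fun t => (m t : Cardinal.{w}))
      = Cardinal.sum (fun t => #(ULift.{w} (Fin (m t)))) := by simp only [h2]
    _ = #(Σ t, ULift.{w} (Fin (m t))) := (Cardinal.mk_sigma _).symm
    _ = ((∑ t, m t : ℕ) : Cardinal.{w}) := by rw [Cardinal.mk_fintype]; simp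

private lemma sum_lt_aleph0' {J : Type} [Fintype J] (g : J → Cardinal.{w})
    (hg : ∀ a, g a < ℵ₀) : Cardinal.sum g < ℵ₀ := by
  have h1 : Cardinal.sum g = Cardinal.sum (fun t => ((g t).toNat : Cardinal.{w})) := by
    congr 1; funext t; rw [Cardinal.cast_toNat_of_lt_aleph0 (hg t)]
  rw [h1, sum_natCast]
  exact nat_lt_aleph0 _

private lemma sum_eq_max {J : Type} [Fintype J] (g : J → Cardinal.{w}) (a : J)
    (hinf : ℵ₀ ≤ g a) (hmax : ∀ b, g b ≤ g a) : Cardinal.sum g = g a := by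
  refine le_antisymm ?_ (Cardinal.le_sum g a)
  have h1 : Cardinal.sum g ≤ Cardinal.sum (fun _ : J => g a) :=
    Cardinal.sum_le_sum _ _ hmax
  have h2 : Cardinal.sum (fun _ : J => g a) = (Fintype.card J : Cardinal.{w}) * g a := by
    rw [Cardinal.sum_const, Cardinal.lift_uzero, Cardinal.mk_fintype, Cardinal.lift_natCast]
  haveI : Nonempty J := ⟨a⟩
  have h3 : (Fintype.card J : Cardinal.{w}) * g a = g a :=
    Cardinal.mul_eq_right hinf ((nat_lt_aleph0 _).le.trans hinf)
      (Nat.cast_ne_zero.2 Fintype.card_ne_zero)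
  exact h1.trans (le_of_eq (h2.trans h3))

private lemma sum_cases' {J : Type} [Fintype J] (g : J → Cardinal.{w}) :
    Cardinal.sum g < ℵ₀ ∨ ∃ a, ℵ₀ ≤ g a ∧ Cardinal.sum g = g a := by
  by_cases h : ∀ a, g a < ℵ₀
  · exact Or.inl (sum_lt_aleph0' g h)
  · push_neg at h
    obtain ⟨a₀, ha₀⟩ := h
    haveI : Nonempty J := ⟨a₀⟩
    obtain ⟨a, ha⟩ := Finite.exists_max g
    exact Or.inr ⟨a, ha₀.trans (ha a₀), sum_eq_max g a (ha₀.trans (ha a₀)) ha⟩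

open Classical in
private noncomputable def rkAux {ι : Type} [Fintype ι] (κ : ι → Cardinal.{w})
    (μ : Cardinal.{w}) : ℕ :=
  (Finset.univ.filter (fun t => ℵ₀ ≤ κ t ∧ κ t < μ)).card

open Classical in
private noncomputable def cfAux {ι : Type} [Fintype ι] (κ : ι → Cardinal.{w})
    (μ : Cardinal.{w}) : Cardinal.{0} :=
  if μ < ℵ₀ then (μ.toNat : Cardinal) else Cardinal.aleph (rkAux κ μ)

private lemma rkAux_mono {ι : Type} [Fintype ι] (κ : ι → Cardinal.{w}) {μ ν : Cardinal.{w}}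
    (h : μ ≤ ν) : rkAux κ μ ≤ rkAux κ ν := by
  classical
  unfold rkAux
  apply Finset.card_le_card
  intro t ht
  simp only [Finset.mem_filter, Finset.mem_univ, true_and] at ht ⊢
  exact ⟨ht.1, lt_of_lt_of_le ht.2 h⟩

private lemma rkAux_strict {ι : Type} [Fintype ι] (κ : ι → Cardinal.{w}) {μ ν : Cardinal.{w}}
    (t₀ : ι) (ht₀ : κ t₀ = μ) (hμ : ℵ₀ ≤ μ) (h : μ < ν) : rkAux κ μ < rkAux κ ν := by
  classical
  unfold rkAux
  apply Finset.card_lt_card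
  constructor
  · intro t ht
    simp only [Finset.mem_filter, Finset.mem_univ, true_and] at ht ⊢
    exact ⟨ht.1, lt_trans ht.2 h⟩
  · intro hsub
    have : t₀ ∈ Finset.univ.filter (fun t => ℵ₀ ≤ κ t ∧ κ t < ν) := by
      simp only [Finset.mem_filter, Finset.mem_univ, true_and]
      exact ⟨ht₀ ▸ hμ, ht₀ ▸ h⟩
    have := hsub this
    simp only [Finset.mem_filter, Finset.mem_univ, true_and] at this
    exact absurd (ht₀ ▸ this.2) (lt_irrefl μ)

private lemma cfAux_mono {ι : Type} [Fintype ι] (κ : ι → Cardinal.{w}) {μ ν : Cardinal.{w}}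
    (h : μ ≤ ν) : cfAux κ μ ≤ cfAux κ ν := by
  unfold cfAux
  by_cases hν : ν < ℵ₀
  · rw [if_pos (lt_of_le_of_lt h hν), if_pos hν]
    exact_mod_cast Cardinal.toNat_le_toNat h hν
  · rw [if_neg hν]
    by_cases hμ : μ < ℵ₀
    · rw [if_pos hμ]
      exact le_trans (nat_lt_aleph0 _).le (Cardinal.aleph0_le_aleph _)
    · rw [if_neg hμ]
      rw [Cardinal.aleph_le_aleph]
      exact_mod_cast rkAux_mono κ h

private lemma cfAux_strict {ι : Type} [Fintype ι] (κ : ι → Cardinal.{w}) {μ ν : Cardinal.{w}}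
    (himg : μ < ℵ₀ ∨ ∃ t, κ t = μ) (h : μ < ν) : cfAux κ μ < cfAux κ ν := by
  unfold cfAux
  by_cases hν : ν < ℵ₀
  · rw [if_pos (lt_trans h hν), if_pos hν]
    exact_mod_cast Cardinal.toNat_lt_toNat h hν
  · rw [if_neg hν]
    by_cases hμ : μ < ℵ₀
    · rw [if_pos hμ]
      exact lt_of_lt_of_le (nat_lt_aleph0 _) (Cardinal.aleph0_le_aleph _)
    · rw [if_neg hμ]
      rcases himg with h' | ⟨t₀, ht₀⟩
      · exact absurd h' hμ
      · rw [Cardinal.aleph_lt_aleph]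
        exact_mod_cast rkAux_strict κ t₀ ht₀ (not_lt.1 hμ) h

private lemma cfAux_zero_iff {ι : Type} [Fintype ι] (κ : ι → Cardinal.{w}) {μ : Cardinal.{w}} :
    cfAux κ μ = 0 ↔ μ = 0 := by
  unfold cfAux
  by_cases hμ : μ < ℵ₀
  · rw [if_pos hμ]
    rw [Nat.cast_eq_zero, Cardinal.toNat_eq_zero]
    constructor
    · rintro (h | h)
      · exact h
      · exact absurd h (not_le.2 hμ)
    · exact fun h => Or.inl h
  · rw [if_neg hμ]
    constructor
    · intro h
      exact absurd h (Cardinal.aleph_pos _).ne'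
    · rintro rfl
      exact absurd (Cardinal.aleph0_pos.trans_le (not_lt.1 hμ)) (lt_irrefl _)

private lemma aleph0_le_cfAux {ι : Type} [Fintype ι] (κ : ι → Cardinal.{w}) {μ : Cardinal.{w}}
    (hμ : ℵ₀ ≤ μ) : ℵ₀ ≤ cfAux κ μ := by
  unfold cfAux
  rw [if_neg (not_lt.2 hμ)]
  exact Cardinal.aleph0_le_aleph _

private lemma cfAux_sum {ι : Type} [Fintype ι] (κ : ι → Cardinal.{w})
    {J : Type} [Fintype J] (h : J → ι) :
    Cardinal.sum (fun j => cfAux κ (κ (h j))) = cfAux κ (Cardinal.sum fun j => κ (h j)) := by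
  rcases sum_cases' (fun j => κ (h j)) with hfin | ⟨a, ha, hsum⟩
  · have hj : ∀ j, κ (h j) < ℵ₀ := fun j =>
      lt_of_le_of_lt (Cardinal.le_sum (fun j => κ (h j)) j) hfin
    have e1 : Cardinal.sum (fun j => cfAux κ (κ (h j)))
        = Cardinal.sum (fun j => (((κ (h j)).toNat : ℕ) : Cardinal.{0})) := by
      congr 1; funext j
      unfold cfAux; rw [if_pos (hj j)]
    have e2 : Cardinal.sum (fun j => κ (h j))
        = Cardinal.sum (fun j => (((κ (h j)).toNat : ℕ) : Cardinal.{w})) := by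
      congr 1; funext j
      rw [Cardinal.cast_toNat_of_lt_aleph0 (hj j)]
    rw [e1, e2, sum_natCast, sum_natCast]
    unfold cfAux
    rw [if_pos (nat_lt_aleph0 _), Cardinal.toNat_natCast]
  · rw [hsum]
    apply sum_eq_max
    · exact aleph0_le_cfAux κ ha
    · intro j
      exact cfAux_mono κ (hsum ▸ Cardinal.le_sum (fun j => κ (h j)) j)
open Classical in
private noncomputable def nounsOf {P : Type u} : Sentence P → Finset P
  | .all p q => {p, q}
  | .exi p q => {p, q}
  | .geq p q => {p, q}
  | .gt p q => {p, q}


/-- If a finite Γ has a model (with infinite universe), then Γ has a model whose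
universe has cardinality ℵ_n for some natural number n. -/
theorem model_of_size_aleph_n {P : Type u} (c : P → P) (hc : ∀ p, c (c p) = p)
    (Γ : Set (Sentence P)) (hfin : Γ.Finite)
    (hmod : ∃ (M : Type v) (I : P → Set M), Infinite M ∧ (∀ p, I (c p) = (I p)ᶜ) ∧
      (∀ ψ ∈ Γ, Satisfies I ψ)) :
    ∃ (n : ℕ) (M : Type) (I : P → Set M), Infinite M ∧ (∀ p, I (c p) = (I p)ᶜ) ∧
      (∀ ψ ∈ Γ, Satisfies I ψ) ∧ #M = Cardinal.aleph n := by
  classical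
  obtain ⟨M, I, hMinf, hcompl, hsat⟩ := hmod
  haveI : Nonempty M := Infinite.nonempty M
  set Q : Finset P := hfin.toFinset.biUnion nounsOf with hQdef
  set k : ℕ := Fintype.card (↥Q → Bool) with hkdef
  set e : (↥Q → Bool) ≃ Fin k := Fintype.equivFin (↥Q → Bool) with hedef
  set θ : M → (↥Q → Bool) := fun x q => decide (x ∈ I ↑q) with hθdef
  set τ : M → Fin k := fun x => e (θ x) with hτdef
  have hτ : ∀ (x : M) (p : P) (hp : p ∈ Q), x ∈ I p ↔ e.symm (τ x) ⟨p, hp⟩ = true := by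
    intro x p hp
    simp only [hτdef, hθdef, Equiv.symm_apply_apply, decide_eq_true_eq]
  set κ : Fin k → Cardinal.{v} := fun t => #{y : M // τ y = t} with hκdef
  set O : Fin k → Type := fun t => (cfAux κ (κ t)).out with hOdef
  set g : (Σ t, O t) → M :=
    fun x => if h : ∃ y : M, τ y = x.1 then h.choose else Classical.arbitrary M with hgdef
  have hgτ : ∀ x : Σ t, O t, τ (g x) = x.1 := by
    intro x
    have h0 : cfAux κ (κ x.1) ≠ 0 := by
      rw [← Cardinal.mk_out (cfAux κ (κ x.1))]
      exact Cardinal.mk_ne_zero_iff.2 ⟨x.2⟩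
    have h1 : κ x.1 ≠ 0 := fun h => h0 (by rw [h, (cfAux_zero_iff κ)])
    have h2 : Nonempty {y : M // τ y = x.1} := Cardinal.mk_ne_zero_iff.1 h1
    obtain ⟨⟨y, hy⟩⟩ := h2
    have hex : ∃ y : M, τ y = x.1 := ⟨y, hy⟩
    simp only [hgdef, dif_pos hex]
    exact hex.choose_spec
  set I' : P → Set (Σ t, O t) := fun p => g ⁻¹' (I p) with hI'def
  have hI'mem : ∀ (p : P) (hp : p ∈ Q) (x : Σ t, O t),
      x ∈ I' p ↔ e.symm x.1 ⟨p, hp⟩ = true := by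
    intro p hp x
    have h1 := hτ (g x) p hp
    rw [hgτ x] at h1
    simpa only [hI'def, Set.mem_preimage] using h1
  have hM'count : ∀ b : Fin k → Prop,
      #{x : Σ t, O t // b x.1} = Cardinal.sum (fun t : {t // b t} => cfAux κ (κ t.1)) := by
    intro b
    rw [Cardinal.mk_congr (sigmaSubtypeEquiv O b), Cardinal.mk_sigma]
    congr 1
    funext t
    exact Cardinal.mk_out _
  have hMcount : ∀ b : Fin k → Prop,
      #{x : M // b (τ x)} = Cardinal.sum (fun t : {t // b t} => κ t.1) := by
    intro b
    rw [Cardinal.mk_congr (fiberEquiv τ b), Cardinal.mk_sigma]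
  have hbridge : ∀ b : Fin k → Prop,
      #{x : Σ t, O t // b x.1} = cfAux κ (#{x : M // b (τ x)})
      ∧ (#{x : M // b (τ x)} < ℵ₀ ∨ ∃ t, κ t = #{x : M // b (τ x)}) := by
    intro b
    rw [hM'count b, hMcount b]
    constructor
    · exact cfAux_sum κ Subtype.val
    · rcases sum_cases' (fun t : {t // b t} => κ t.1) with h | ⟨a, _, ha⟩
      · exact Or.inl h
      · exact Or.inr ⟨a.1, ha.symm⟩
  have hkey : ∀ (p : P) (hp : p ∈ Q),
      #(I' p) = cfAux κ (#(I p)) ∧ (#(I p) < ℵ₀ ∨ ∃ t, κ t = #(I p)) := by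
    intro p hp
    have e1 : #(I p) = #{x : M // (fun t => e.symm t ⟨p, hp⟩ = true) (τ x)} :=
      Cardinal.mk_congr (Equiv.subtypeEquivRight fun x => hτ x p hp)
    have e2 : #(I' p) = #{x : Σ t, O t // (fun t => e.symm t ⟨p, hp⟩ = true) x.1} :=
      Cardinal.mk_congr (Equiv.subtypeEquivRight fun x => hI'mem p hp x)
    rw [e1, e2]
    exact hbridge (fun t => e.symm t ⟨p, hp⟩ = true)
  have hMinf' : ℵ₀ ≤ #M := Cardinal.infinite_iff.1 hMinf
  have hMcard : #(Σ t, O t) = cfAux κ (#M) := by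
    have h1 := (hbridge fun _ => True).1
    have e1 : #(Σ t, O t) = #{x : Σ t, O t // True} :=
      (Cardinal.mk_congr (Equiv.subtypeUnivEquiv fun _ => trivial)).symm
    have e2 : #M = #{x : M // True} :=
      (Cardinal.mk_congr (Equiv.subtypeUnivEquiv fun _ => trivial)).symm
    rw [e1, e2]
    exact h1
  have hfinal : #(Σ t, O t) = Cardinal.aleph (rkAux κ (#M)) := by
    rw [hMcard]
    unfold cfAux
    rw [if_neg (not_lt.2 hMinf')]
  refine ⟨rkAux κ (#M), Σ t, O t, I', ?_, ?_, ?_, hfinal⟩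
  · rw [Cardinal.infinite_iff, hfinal]
    exact Cardinal.aleph0_le_aleph _
  · intro p
    simp only [hI'def, hcompl p]
    rfl
  · intro ψ hψ
    have hs := hsat ψ hψ
    have hmemQ : ∀ p, p ∈ nounsOf ψ → p ∈ Q :=
      fun p hp => Finset.mem_biUnion.2 ⟨ψ, hfin.mem_toFinset.2 hψ, hp⟩
    cases ψ with
    | all p q =>
        simp only [Satisfies] at hs ⊢
        simp only [hI'def]
        exact fun x hx => hs hx
    | exi p q =>
        have hp : p ∈ Q := hmemQ p (by simp [nounsOf])
        have hq : q ∈ Q := hmemQ q (by simp [nounsOf])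
        simp only [Satisfies] at hs ⊢
        obtain ⟨w, hwp, hwq⟩ := hs
        have hκw : κ (τ w) ≠ 0 := Cardinal.mk_ne_zero_iff.2 ⟨⟨w, rfl⟩⟩
        have hOw : Nonempty (O (τ w)) := by
          apply Cardinal.mk_ne_zero_iff.1
          have : #(O (τ w)) = cfAux κ (κ (τ w)) := Cardinal.mk_out _
          rw [this]
          exact fun h => hκw ((cfAux_zero_iff κ).1 h)
        obtain ⟨y⟩ := hOw
        refine ⟨⟨τ w, y⟩, ?_, ?_⟩
        · exact (hI'mem p hp ⟨τ w, y⟩).2 ((hτ w p hp).1 hwp)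
        · exact (hI'mem q hq ⟨τ w, y⟩).2 ((hτ w q hq).1 hwq)
    | geq p q =>
        have hp : p ∈ Q := hmemQ p (by simp [nounsOf])
        have hq : q ∈ Q := hmemQ q (by simp [nounsOf])
        simp only [Satisfies] at hs ⊢
        rw [(hkey p hp).1, (hkey q hq).1]
        exact cfAux_mono κ hs
    | gt p q =>
        have hp : p ∈ Q := hmemQ p (by simp [nounsOf])
        have hq : q ∈ Q := hmemQ q (by simp [nounsOf])
        simp only [Satisfies] at hs ⊢
        rw [(hkey p hp).1, (hkey q hq).1]
        exact cfAux_strict κ (hkey q hq).2 hs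
end

section
/- For all nouns p, q, x and every sentence φ of L(P), the set {∃>(p,x), ∃>(q,x̄)} derives φ; that is, {∃>(p,x), ∃>(q,x̄)} ⊢ φ (this set is inconsistent). -/
open Cardinal

/-- The set {∃>(p,x), ∃>(q,x̄)} is inconsistent: it derives every sentence. -/
theorem inconsistent_gt_gt_compl {P : Type u} (c : P → P) (hc : ∀ p, c (c p) = p)
    (p q x : P) (φ : Sentence P) :
    Derives c ({Sentence.gt p x, Sentence.gt q (c x)} : Set (Sentence P)) φ := by
  have h1 : Derives c ({Sentence.gt p x, Sentence.gt q (c x)} : Set (Sentence P)) (.gt p x) :=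
    .hyp (Or.inl rfl)
  have h2 : Derives c ({Sentence.gt p x, Sentence.gt q (c x)} : Set (Sentence P)) (.gt q (c x)) :=
    .hyp (Or.inr rfl)
  have h3 := Derives.weakMoreAnti (x := p) h2
  rw [hc] at h3
  exact Derives.exFalsoCard h1 h3
end

section
/- For all nouns p, q and every sentence φ of L(P), the set {∃≥(p,p̄), ∃>(q,p)} derives φ; that is, {∃≥(p,p̄), ∃>(q,p)} ⊢ φ (this set is inconsistent). -/
open Cardinal

/-- The set {∃≥(p,p̄), ∃>(q,p)} is inconsistent: it derives every sentence. -/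
theorem inconsistent_geq_compl_gt {P : Type u} (c : P → P) (hc : ∀ p, c (c p) = p)
    (p q : P) (φ : Sentence P) :
    Derives c ({Sentence.geq p (c p), Sentence.gt q p} : Set (Sentence P)) φ := by
  have h1 : Derives c ({Sentence.geq p (c p), Sentence.gt q p} : Set (Sentence P)) (Sentence.geq p (c p)) := .hyp (Set.mem_insert _ _)
  have h2 : Derives c ({Sentence.geq p (c p), Sentence.gt q p} : Set (Sentence P)) (Sentence.gt q p) := .hyp (Set.mem_insert_of_mem _ rfl)
  exact .exFalsoCard h2 (.up (.subsetSize (.axm p)) h1)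
end

section
/- For all nouns p, q, x of L(P), {∃≥(p,p̄), ∃>(x,q)} ⊢ ∃>(p,q). -/
open Cardinal

/-- {∃≥(p,p̄), ∃>(x,q)} ⊢ ∃>(p,q). -/
theorem geq_compl_gt_derives_gt {P : Type u} (c : P → P) (hc : ∀ p, c (c p) = p)
    (p q x : P) :
    Derives c ({Sentence.geq p (c p), Sentence.gt x q} : Set (Sentence P))
      (Sentence.gt p q) := by
  exact .moreRight (.up (.subsetSize (.axm p)) (.hyp (Or.inl rfl))) (.hyp (Or.inr rfl))
end

section
/- For all nouns p, q of L(P), {∃≥(p,p̄), ∃>(q,q̄)} ⊢ ∃(p,q). -/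
open Cardinal

/-- {∃≥(p,p̄), ∃>(q,q̄)} ⊢ ∃(p,q). -/
theorem geq_compl_gt_compl_derives_exi {P : Type u} (c : P → P) (hc : ∀ p, c (c p) = p)
    (p q : P) :
    Derives c ({Sentence.geq p (c p), Sentence.gt q (c q)} : Set (Sentence P))
      (Sentence.exi p q) := by
  have h1 : Derives c ({Sentence.geq p (c p), Sentence.gt q (c q)} : Set (Sentence P))
      (.geq p (c p)) := .hyp (by simp)
  have h2 : Derives c ({Sentence.geq p (c p), Sentence.gt q (c q)} : Set (Sentence P))
      (.gt q (c q)) := .hyp (by simp)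
  have h3 := Derives.up (q := q) (Derives.subsetSize (Derives.axm p)) h1
  have h5 := Derives.moreSome (Derives.moreRight h3 h2)
  rwa [hc] at h5
end

section
/- There exist subsets P and Q of ℕ such that the cardinality of P is at least the cardinality of ℕ \ P, the cardinality of Q is at least the cardinality of ℕ \ Q, the intersection (ℕ \ P) ∩ (ℕ \ Q) is nonempty, and yet P ∩ Q = ∅. (This witnesses that the rule (maj), 'from ∃≥(p,p̄), ∃≥(q,q̄) and ∃(p̄,q̄) infer ∃(p,q)', sound on finite universes, is unsound on infinite universes.) -/
open Cardinal

/-- The rule (maj) is unsound on the infinite universe ℕ: there are P, Q with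
|P| ≥ |ℕ \ P|, |Q| ≥ |ℕ \ Q|, (ℕ \ P) ∩ (ℕ \ Q) nonempty, yet P ∩ Q = ∅. -/
theorem maj_unsound :
    ∃ P Q : Set ℕ, #(Pᶜ : Set ℕ) ≤ #P ∧ #(Qᶜ : Set ℕ) ≤ #Q ∧
      (Pᶜ ∩ Qᶜ).Nonempty ∧ P ∩ Q = ∅ := by
  refine ⟨{n | Even n ∧ n ≠ 0}, {n | Odd n}, ?_, ?_, ⟨0, by simp [Nat.odd_iff]⟩, ?_⟩
  · refine le_trans (Cardinal.mk_le_aleph0) ?_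
    rw [Cardinal.aleph0_le_mk_iff, Set.infinite_coe_iff]
    have : Set.range (fun k : ℕ => 2 * (k + 1)) ⊆ {n | Even n ∧ n ≠ 0} := by
      rintro _ ⟨k, rfl⟩; exact ⟨⟨k + 1, by ring⟩, by simp⟩
    exact Set.Infinite.mono this (Set.infinite_range_of_injective (by intro a b h; simp only at h; omega))
  · refine le_trans (Cardinal.mk_le_aleph0) ?_
    rw [Cardinal.aleph0_le_mk_iff, Set.infinite_coe_iff]
    have : Set.range (fun k : ℕ => 2 * k + 1) ⊆ {n | Odd n} := by
      rintro _ ⟨k, rfl⟩; exact ⟨k, by ring⟩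
    exact Set.Infinite.mono this (Set.infinite_range_of_injective (by intro a b h; simp only at h; omega))
  · ext n; simp only [Set.mem_inter_iff, Set.mem_setOf_eq, Set.mem_empty_iff_false, iff_false]
    rintro ⟨⟨he, _⟩, ho⟩; exact ((Nat.not_odd_iff_even.mpr he) ho)
end
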